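/- For every real number α ≥ 0 and all integers s ≥ 1 and x ≥ 1, S_{8,s,x}^{(α)} = ∑_{p=0}^{s} ∑_{u=0}^{s} ∑_{w=0}^{s} ∑_{k=1}^{x+1} ( C_{82,s}(x,k;w,p,u) − C_{83,s}(x,k;w,p,u) ) · σ_{w+α−1−u, p+2}(k), where S_{8,s,x}^{(α)} is the coefficient of q^x in ∑_{i=1}^{x+1} i^{α−1} · Σ_{8,s}(q,i). -/

import Mathlib

open PowerSeries Finset

/-- Generalized sum-of-divisors function `σ_α(n) = ∑_{d ∣ n} d^α` (real powers). -/
noncomputable def sigma' (α : ℝ) (n : ℕ) : ℝ := ∑ d ∈ n.divisors, (d : ℝ) ^ α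

/-- Bounded-divisor sum `σ_{α,m}(n) = ∑_{d ∣ n, d ≤ ⌊n/m⌋} d^α`. -/
noncomputable def sigmaB (α : ℝ) (m n : ℕ) : ℝ :=
  ∑ d ∈ n.divisors.filter (fun d => d ≤ n / m), (d : ℝ) ^ α

/-- Binomial-convolution divisor sum
`B_{k,m}(β; n) = ∑_{d ∣ n, d ≤ ⌊n/m⌋} C(n/d - m + k, k) d^β`. -/
noncomputable def Bfun (k m : ℕ) (β : ℝ) (n : ℕ) : ℝ :=
  ∑ d ∈ n.divisors.filter (fun d => d ≤ n / m),
    ((n / d - m + k).choose k : ℝ) * (d : ℝ) ^ β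

/-- Unsigned Stirling numbers of the first kind. -/
def stirling1 : ℕ → ℕ → ℕ
  | 0, 0 => 1
  | 0, _ + 1 => 0
  | _ + 1, 0 => 0
  | s + 1, m + 1 => s * stirling1 s (m + 1) + stirling1 s m

/-- Stirling numbers of the second kind. -/
def stirling2 : ℕ → ℕ → ℕ
  | 0, 0 => 1
  | 0, _ + 1 => 0
  | _ + 1, 0 => 0
  | m + 1, k + 1 => (k + 1) * stirling2 m (k + 1) + stirling2 m k

/-- Binomial coefficient `C(z, j) = z(z-1)⋯(z-j+1)/j!` with integer top argument. -/
noncomputable def zchoose (z : ℤ) (j : ℕ) : ℝ :=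
  (∏ i ∈ Finset.range j, ((z : ℝ) - (i : ℝ))) / (j.factorial : ℝ)

/-- Binomial coefficient `C(a, b)` with natural top and integer bottom argument,
zero when `b < 0`. -/
noncomputable def nchooseZ (a : ℕ) (b : ℤ) : ℝ :=
  if 0 ≤ b then (a.choose b.toNat : ℝ) else 0

/-- The coefficients `C_{4,s}(r,p,m)`. -/
noncomputable def C4 (s r p m : ℕ) : ℝ :=
  ∑ k ∈ Finset.range (m + 1),
    (s.choose r : ℝ) * (stirling1 (s - r) m : ℝ) * (stirling2 m k : ℝ) *
      zchoose ((s : ℤ) - r - k) p * (-1 : ℝ) ^ ((s : ℤ) - r - k + p) *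
      (k.factorial : ℝ) * (r.factorial : ℝ)

/-- The coefficients `C_{8,s}(r,p,n,w)`. -/
noncomputable def C8 (s r p n w : ℕ) : ℝ :=
  ∑ m ∈ Finset.range (s - r + 1), ∑ k ∈ Finset.range (m + 1),
    ∑ m1 ∈ Finset.range (r + 1 - n + 1), ∑ m2 ∈ Finset.range (n + 1),
      (s.choose r : ℝ) * (stirling1 (s - r) m : ℝ) * (stirling2 m k : ℝ) *
        zchoose ((s : ℤ) - r - k) p * (stirling1 (r + 1 - n) m1 : ℝ) *
        (stirling1 n m2 : ℝ) * nchooseZ m2 ((w : ℤ) - m - m1) *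
        (-1 : ℝ) ^ (s - k + p + n + m1 + m2) * (k.factorial : ℝ) *
        (((n : ℤ) - 2 - r : ℤ) : ℝ) ^ ((m : ℤ) + m1 + m2 - w)

/-- The component power series `Σ_{4,s}(q,i)` (formal power series over `ℝ`). -/
noncomputable def Sigma4 (s i : ℕ) : PowerSeries ℝ :=
  ∑ r ∈ Finset.range (s + 1), ∑ p ∈ Finset.range (s + 1), ∑ m ∈ Finset.range (s + 1),
    PowerSeries.C (C4 s r p m) * X ^ ((p + 1) * i + r) * ((1 - X ^ i)⁻¹) ^ (s - r + 1) *
      (PowerSeries.C ((i : ℝ) ^ (m + 1)) * ((1 - X)⁻¹) ^ (r + 1) -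
        PowerSeries.C (((r : ℝ) + 1) * (i : ℝ) ^ m) * ((1 - X)⁻¹) ^ (r + 2))

/-- The component power series `Σ_{8,s}(q,i)` (formal power series over `ℝ`). -/
noncomputable def Sigma8 (s i : ℕ) : PowerSeries ℝ :=
  ∑ r ∈ Finset.range (s + 1), ∑ p ∈ Finset.range (s + 1),
    ∑ n ∈ Finset.range (r + 2), ∑ w ∈ Finset.range (s + 1),
      PowerSeries.C (C8 s r p n w * (i : ℝ) ^ w) * X ^ ((p + 2) * i + n - 1) *
        ((1 - X ^ i)⁻¹) ^ (s - r + 1) *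
        (PowerSeries.C (r.choose n : ℝ) * ((1 - X)⁻¹) ^ (r + 1) -
          PowerSeries.C ((r + 1).choose n : ℝ) * ((1 - X)⁻¹) ^ (r + 2))

/-- `S_{4,s,x}^{(α)}`: the coefficient of `q^x` in `∑_{i=1}^{max(x,1)} i^{α-1} Σ_{4,s}(q,i)`. -/
noncomputable def S4c (α : ℝ) (s x : ℕ) : ℝ :=
  PowerSeries.coeff x
    (∑ i ∈ Finset.Icc 1 (max x 1), PowerSeries.C ((i : ℝ) ^ (α - 1)) * Sigma4 s i)

/-- `S_{8,s,x}^{(α)}`: the coefficient of `q^x` in `∑_{i=1}^{x+1} i^{α-1} Σ_{8,s}(q,i)`. -/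
noncomputable def S8c (α : ℝ) (s x : ℕ) : ℝ :=
  PowerSeries.coeff x
    (∑ i ∈ Finset.Icc 1 (x + 1), PowerSeries.C ((i : ℝ) ^ (α - 1)) * Sigma8 s i)

/-- The coefficients `C_{82,s}(x,k; w,p,u)`. -/
noncomputable def C82 (s x k w p u : ℕ) : ℝ :=
  ∑ r ∈ Finset.range (s + 1), ∑ n ∈ Finset.range (r + 2),
    ∑ j ∈ Finset.range (s - r + 1),
      zchoose ((x : ℤ) + 1 - n - k + r) r * (r.choose n : ℝ) *
        (stirling1 (s - r) j : ℝ) * (j.choose u : ℝ) * (-1 : ℝ) ^ ((s : ℤ) - r - u) *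
        (((p : ℤ) + 2 - s + r : ℤ) : ℝ) ^ (j - u) * (k : ℝ) ^ u * C8 s r p n w /
        ((s - r).factorial : ℝ)

/-- The coefficients `C_{83,s}(x,k; w,p,u)`. -/
noncomputable def C83 (s x k w p u : ℕ) : ℝ :=
  ∑ r ∈ Finset.range (s + 1), ∑ n ∈ Finset.range (r + 2),
    ∑ j ∈ Finset.range (s - r + 1),
      zchoose ((x : ℤ) + 2 - n - k + r) (r + 1) * ((r + 1).choose n : ℝ) *
        (stirling1 (s - r) j : ℝ) * (j.choose u : ℝ) * (-1 : ℝ) ^ ((s : ℤ) - r - u) *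
        (((p : ℤ) + 2 - s + r : ℤ) : ℝ) ^ (j - u) * (k : ℝ) ^ u * C8 s r p n w /
        ((s - r).factorial : ℝ)


/-!
Fix `p, w, r, n` and write `a = s - r`. On the series side, shifting `x` to `x + 1` absorbs the
`q⁻¹` in `q^((p+2)i+n-1)`, and `q^((p+2)i) (1 - q^i)^(-(a+1))` is `q^(p+2) (1 - q)^(-(a+1))`
with `q` replaced by `q^i`. So the coefficient of `q^x` is a sum over `j ≥ p + 2`, `ij ≤ x + 1`, of
`C(a + j - p - 2, a)` times the coefficient of `q^(x+1-ij)` in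
`q^n (C(r,n) (1-q)^(-(r+1)) - C(r+1,n) (1-q)^(-(r+2)))`, and that coefficient is the `zchoose`
bracket shared by `C_{82}` and `C_{83}` at `k = ij`. The pairs `(i, j)` are the pairs `(d, k/d)`
with `d ∣ k` and `d ≤ k/(p+2)`.

On the divisor side `k^u d^(-u) = (k/d)^u`, the sum over `u` is the binomial expansion of
`(p + 2 - a - k/d)^j`, and `∑_j ⟦a,j⟧ y^j` is the rising factorial of length `a` at `y`; at
`y = -(a + k/d - p - 2)` it equals `(-1)^a a! C(a + k/d - p - 2, a)`.
-/

theorem stirling1_eq_stirlingFirst : stirling1 = Nat.stirlingFirst := by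
  ext n k
  induction n generalizing k with
  | zero => cases k <;> rfl
  | succ n ih =>
    cases k with
    | zero => rfl
    | succ k => rw [Nat.stirlingFirst_succ_succ, ← ih, ← ih]; rfl

theorem Nat.sum_stirlingFirst_mul_pow {R : Type*} [CommSemiring R] (n : ℕ) (y : R) :
    ∑ j ∈ range (n + 1), (n.stirlingFirst j : R) * y ^ j = (ascPochhammer R n).eval y := by
  induction n with
  | zero => simp
  | succ n ih =>
    set g : ℕ → R := fun j => (n.stirlingFirst j : R) * y ^ j with hg
    -- the shift drops `g 0`, which is nonzero only for `n = 0`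
    have hshift :
        (n : R) * ∑ j ∈ range (n + 1), g (j + 1) = (n : R) * ∑ j ∈ range (n + 1), g j := by
      rcases n with _ | n
      · simp
      · have h := (sum_range_succ' g (n + 2)).symm.trans (sum_range_succ g (n + 2))
        simp only [hg, Nat.stirlingFirst_succ_zero, Nat.cast_zero, zero_mul, add_zero,
          Nat.stirlingFirst_eq_zero_of_lt (Nat.lt_succ_self _)] at h
        rw [h]
    rw [ascPochhammer_succ_eval, ← ih, sum_range_succ', Nat.stirlingFirst_succ_zero, Nat.cast_zero,
      zero_mul, add_zero, mul_add, sum_mul, mul_comm _ (n : R), ← hshift, mul_sum,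
      ← sum_add_distrib]
    refine sum_congr rfl fun j _ => ?_
    simp only [g, Nat.stirlingFirst_succ_succ, Nat.cast_add, Nat.cast_mul, pow_succ]
    ring

theorem Nat.sum_stirlingFirst_mul_neg_pow {R : Type*} [CommRing R] (n : ℕ) (y : R) :
    (-1) ^ n * ∑ j ∈ range (n + 1), (n.stirlingFirst j : R) * (-y) ^ j =
      (descPochhammer R n).eval y := by
  rw [Nat.sum_stirlingFirst_mul_pow, ascPochhammer_eval_neg_eq_descPochhammer, ← mul_assoc,
    ← mul_pow, neg_one_mul, neg_neg, one_pow, one_mul]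

theorem Nat.sum_stirlingFirst_mul_sum_choose {R : Type*} [CommRing R] {a M : ℕ} (ha : a ≤ M)
    (y z : R) :
    ∑ j ∈ range (a + 1), ∑ u ∈ range (M + 1),
        (a.stirlingFirst j : R) * j.choose u * (-1) ^ (a + u) * y ^ (j - u) * z ^ u =
      (descPochhammer R a).eval (z - y) := by
  have hinner : ∀ j ∈ range (a + 1), ∑ u ∈ range (M + 1),
      (a.stirlingFirst j : R) * j.choose u * (-1) ^ (a + u) * y ^ (j - u) * z ^ u =
        (-1) ^ a * ((a.stirlingFirst j : R) * (-(z - y)) ^ j) := by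
    intro j hj
    have hjM : j + 1 ≤ M + 1 := by rw [mem_range] at hj; omega
    rw [← sum_subset (range_subset_range.mpr hjM) fun u _ hu => by
      rw [Nat.choose_eq_zero_of_lt (by simpa using hu)]; simp]
    rw [neg_sub, sub_eq_neg_add, add_pow, mul_sum, mul_sum]
    refine sum_congr rfl fun u _ => ?_
    rw [neg_pow z, pow_add]
    ring
  rw [sum_congr rfl hinner, ← mul_sum, Nat.sum_stirlingFirst_mul_neg_pow]

theorem sum_stirling1_choose_mul_rpow {s r p k d : ℕ} (E : ℝ) (hr : r ≤ s) (hd : 0 < d)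
    (hdk : d ∣ k) (hkd : p + 2 ≤ k / d) :
    ∑ j ∈ range (s - r + 1), ∑ u ∈ range (s + 1),
        (stirling1 (s - r) j : ℝ) * (j.choose u : ℝ) * (-1 : ℝ) ^ ((s : ℤ) - r - u) *
          (((p : ℤ) + 2 - s + r : ℤ) : ℝ) ^ (j - u) * (k : ℝ) ^ u * (d : ℝ) ^ (E - u) =
      (d : ℝ) ^ E * (s - r).factorial * (s - r + (k / d - (p + 2))).choose (s - r) := by
  have hsign (u : ℕ) : (-1 : ℝ) ^ ((s : ℤ) - r - u) = (-1) ^ (s - r + u) := by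
    rw [show (s : ℤ) - r - u = ((s - r + u : ℕ) : ℤ) + (-2) * u by push_cast [hr]; ring,
      zpow_add₀ (by norm_num), zpow_mul, zpow_natCast]
    norm_num
  have hpow (u : ℕ) : (k : ℝ) ^ u * (d : ℝ) ^ (E - u) = ((k / d : ℕ) : ℝ) ^ u * (d : ℝ) ^ E := by
    rw [Real.rpow_sub (by positivity), Real.rpow_natCast, Nat.cast_div hdk (by positivity),
      div_pow, mul_div_assoc', div_mul_eq_mul_div]
  have hdiff : ((k / d : ℕ) : ℝ) - (((p : ℤ) + 2 - s + r : ℤ) : ℝ) =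
      ((s - r + (k / d - (p + 2)) : ℕ) : ℝ) := by
    push_cast [hr, hkd]
    ring
  simp_rw [hsign, mul_assoc _ ((k : ℝ) ^ _), hpow, ← mul_assoc, ← sum_mul,
    stirling1_eq_stirlingFirst]
  rw [Nat.sum_stirlingFirst_mul_sum_choose (Nat.sub_le s r), hdiff,
    descPochhammer_eval_eq_descFactorial, Nat.descFactorial_eq_factorial_mul_choose]
  push_cast
  ring

theorem sum_stirling1_choose_mul_sigmaB (E : ℝ) {s r : ℕ} (hr : r ≤ s) (p k : ℕ) :
    ∑ u ∈ range (s + 1), (∑ j ∈ range (s - r + 1),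
        (stirling1 (s - r) j : ℝ) * (j.choose u : ℝ) * (-1 : ℝ) ^ ((s : ℤ) - r - u) *
          (((p : ℤ) + 2 - s + r : ℤ) : ℝ) ^ (j - u) * (k : ℝ) ^ u) * sigmaB (E - u) (p + 2) k =
      ∑ d ∈ k.divisors.filter (· ≤ k / (p + 2)),
        (d : ℝ) ^ E * (s - r).factorial * (s - r + (k / d - (p + 2))).choose (s - r) := by
  simp_rw [sigmaB, sum_mul_sum]
  rw [sum_comm, sum_congr rfl fun j _ => sum_comm, sum_comm]
  refine sum_congr rfl fun d hd => ?_
  simp only [mem_filter, Nat.mem_divisors] at hd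
  obtain ⟨⟨hdk, hk⟩, hdle⟩ := hd
  have hd : 0 < d := Nat.pos_of_dvd_of_pos hdk (Nat.pos_of_ne_zero hk)
  have hkd : p + 2 ≤ k / d := by
    rwa [Nat.le_div_iff_mul_le hd, mul_comm, ← Nat.le_div_iff_mul_le (by omega)]
  exact sum_stirling1_choose_mul_rpow E hr hd hdk hkd

namespace PowerSeries

theorem coeff_expand_mul_eq_sum {R : Type*} [CommRing R] {i : ℕ} (hi : i ≠ 0) (f g : R⟦X⟧)
    (N : ℕ) :
    coeff N (expand i hi f * g) = ∑ j ∈ range (N / i + 1), coeff j f * coeff (N - i * j) g := by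
  simp_rw [coeff_mul, coeff_expand, ite_mul, zero_mul, ← sum_filter]
  symm
  refine sum_nbij' (fun j => (i * j, N - i * j)) (fun q => q.1 / i) ?_ ?_ ?_ ?_ ?_
  · intro j hj
    have : i * j ≤ N := by
      rw [mem_range, Nat.lt_succ_iff, Nat.le_div_iff_mul_le (Nat.pos_of_ne_zero hi)] at hj
      linarith
    simp [HasAntidiagonal.mem_antidiagonal, this]
  · rintro ⟨c, c'⟩ hq
    simp only [mem_filter, HasAntidiagonal.mem_antidiagonal] at hq
    simp only [mem_range, Nat.lt_succ_iff]
    exact Nat.div_le_div_right (by omega)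
  · intro j _
    simp [Nat.mul_div_cancel_left j (Nat.pos_of_ne_zero hi)]
  · rintro ⟨c, c'⟩ hq
    simp only [mem_filter, HasAntidiagonal.mem_antidiagonal] at hq
    simp [Nat.mul_div_cancel' hq.2, ← hq.1]
  · intro j _
    simp [Nat.mul_div_cancel_left j (Nat.pos_of_ne_zero hi)]

variable {k : Type*} [Field k]

theorem inv_one_sub_X_eq_mk_one : (1 - X : k⟦X⟧)⁻¹ = mk 1 := by
  rw [inv_eq_iff_mul_eq_one (by simp)]
  exact mk_one_mul_one_sub_eq_one k

theorem coeff_inv_one_sub_X_pow (b n : ℕ) :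
    coeff n ((1 - X : k⟦X⟧)⁻¹ ^ (b + 1)) = (b + n).choose b := by
  rw [inv_one_sub_X_eq_mk_one, mk_one_pow_eq_mk_choose_add, coeff_mk]

theorem expand_inv_one_sub_X {i : ℕ} (hi : i ≠ 0) :
    expand i hi (1 - X : k⟦X⟧)⁻¹ = (1 - X ^ i)⁻¹ := by
  have h : (1 - X ^ i : k⟦X⟧) = expand i hi (1 - X) := by simp
  rw [eq_inv_iff_mul_eq_one (by simp [hi]), h, ← map_mul, PowerSeries.inv_mul_cancel _ (by simp),
    map_one]

theorem coeff_X_pow_mul_inv_one_sub_X_pow_pow_mul {i m : ℕ} (hi : 0 < i) (hm : 0 < m)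
    (n a x : ℕ) (g : k⟦X⟧) :
    coeff x (X ^ (m * i + n - 1) * (1 - X ^ i)⁻¹ ^ (a + 1) * g) =
      ∑ j ∈ Icc m ((x + 1) / i),
        ((a + (j - m)).choose a : k) * coeff (x + 1 - i * j) (X ^ n * g) := by
  have hshift : X * (X ^ (m * i + n - 1) * (1 - X ^ i)⁻¹ ^ (a + 1) * g) =
      expand i hi.ne' (X ^ m * (1 - X)⁻¹ ^ (a + 1)) * (X ^ n * g) := by
    have hexp : m * i + n - 1 + 1 = i * m + n := by
      have := Nat.mul_pos hm hi
      rw [Nat.sub_add_cancel (by omega), mul_comm]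
    rw [map_mul, map_pow, map_pow, expand_X, expand_inv_one_sub_X, ← pow_mul, ← mul_assoc,
      ← mul_assoc, ← pow_succ', hexp, pow_add]
    ring
  rw [← coeff_succ_X_mul, hshift, coeff_expand_mul_eq_sum]
  simp_rw [coeff_X_pow_mul', coeff_inv_one_sub_X_pow, ite_mul, zero_mul, ← sum_filter]
  congr 1
  ext j
  simp only [mem_filter, mem_range, mem_Icc]
  omega

end PowerSeries

theorem Nat.sum_Icc_sum_divisors_filter_le_div {M : Type*} [AddCommMonoid M] {m : ℕ}
    (hm : 0 < m) (N : ℕ) (G : ℕ → ℕ → M) :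
    ∑ k ∈ Icc 1 N, ∑ d ∈ k.divisors.filter (· ≤ k / m), G k d =
      ∑ d ∈ Icc 1 N, ∑ j ∈ Icc m (N / d), G (d * j) d := by
  rw [sum_comm' (t' := Icc 1 N) (s' := fun d => (Icc 1 N).filter (fun k => d ∣ k ∧ d * m ≤ k))]
  · refine sum_congr rfl fun d hd => ?_
    have hd : 0 < d := (mem_Icc.mp hd).1
    refine sum_nbij' (· / d) (d * ·) ?_ ?_ ?_ ?_ ?_
    · intro k hk
      simp only [mem_filter, mem_Icc] at hk ⊢
      obtain ⟨⟨-, hkN⟩, hdk, hmk⟩ := hk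
      exact ⟨(Nat.le_div_iff_mul_le hd).mpr (by linarith), Nat.div_le_div_right hkN⟩
    · intro j hj
      simp only [mem_filter, mem_Icc] at hj ⊢
      have := (Nat.le_div_iff_mul_le hd).mp hj.2
      refine ⟨⟨by nlinarith, by linarith⟩, dvd_mul_right d j, by nlinarith⟩
    · intro k hk
      simp only [mem_filter] at hk
      exact Nat.mul_div_cancel' hk.2.1
    · intro j _
      exact Nat.mul_div_cancel_left j hd
    · intro k hk
      simp only [mem_filter] at hk
      rw [Nat.mul_div_cancel' hk.2.1]
  · intro k d
    simp only [mem_Icc, mem_filter, Nat.mem_divisors]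
    constructor
    · rintro ⟨hk, ⟨hdk, -⟩, hdm⟩
      have hd := Nat.pos_of_dvd_of_pos hdk (by omega)
      have := Nat.le_of_dvd (by omega) hdk
      exact ⟨⟨hk, hdk, (Nat.le_div_iff_mul_le hm).mp hdm⟩, by omega, by omega⟩
    · rintro ⟨⟨hk, hdk, hdm⟩, -⟩
      exact ⟨hk, ⟨hdk, by omega⟩, (Nat.le_div_iff_mul_le hm).mpr hdm⟩

theorem zchoose_natCast (c j : ℕ) : zchoose c j = c.choose j := by
  rw [zchoose, Int.cast_natCast, ← descPochhammer_eval_eq_prod_range,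
    descPochhammer_eval_eq_descFactorial, Nat.descFactorial_eq_factorial_mul_choose, Nat.cast_mul]
  field_simp

noncomputable def zchooseBracket (x r n k : ℕ) : ℝ :=
  zchoose ((x : ℤ) + 1 - n - k + r) r * (r.choose n : ℝ) -
    zchoose ((x : ℤ) + 2 - n - k + r) (r + 1) * ((r + 1).choose n : ℝ)

noncomputable def bracketSeries (r n : ℕ) : ℝ⟦X⟧ :=
  X ^ n * (C (r.choose n : ℝ) * (1 - X)⁻¹ ^ (r + 1) -
    C ((r + 1).choose n : ℝ) * (1 - X)⁻¹ ^ (r + 2))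

theorem coeff_bracketSeries (r n M : ℕ) :
    coeff M (bracketSeries r n) = if n ≤ M then
      (r.choose n : ℝ) * (r + (M - n)).choose r -
        ((r + 1).choose n : ℝ) * (r + 1 + (M - n)).choose (r + 1) else 0 := by
  rw [bracketSeries, coeff_X_pow_mul', map_sub, coeff_C_mul, coeff_C_mul,
    coeff_inv_one_sub_X_pow, coeff_inv_one_sub_X_pow]

theorem zchooseBracket_eq_coeff_bracketSeries {x r n k : ℕ} (hn : n ≤ r + 1) (hk : k ≤ x + 1) :
    zchooseBracket x r n k = coeff (x + 1 - k) (bracketSeries r n) := by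
  rw [zchooseBracket, coeff_bracketSeries]
  split_ifs with h
  · rw [show (x : ℤ) + 1 - n - k + r = ((r + (x + 1 - k - n) : ℕ) : ℤ) by omega,
      show (x : ℤ) + 2 - n - k + r = ((r + 1 + (x + 1 - k - n) : ℕ) : ℤ) by omega,
      zchoose_natCast, zchoose_natCast]
    ring
  -- outside the support both `zchoose` arguments lie in `[0, r]`, unless `n = r + 1`,
  -- where `r.choose n` vanishes instead
  · rw [show (x : ℤ) + 2 - n - k + r = ((x + 2 + r - n - k : ℕ) : ℤ) by omega, zchoose_natCast,
      Nat.choose_eq_zero_of_lt (show x + 2 + r - n - k < r + 1 by omega)]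
    rcases Nat.lt_or_ge r n with hrn | hrn
    · rw [Nat.choose_eq_zero_of_lt hrn]
      simp
    · rw [show (x : ℤ) + 1 - n - k + r = ((x + 1 + r - n - k : ℕ) : ℤ) by omega, zchoose_natCast,
        Nat.choose_eq_zero_of_lt (show x + 1 + r - n - k < r by omega)]
      simp

theorem C82_sub_C83 (s x k w p u : ℕ) :
    C82 s x k w p u - C83 s x k w p u =
      ∑ r ∈ range (s + 1), ∑ n ∈ range (r + 2),
        zchooseBracket x r n k * C8 s r p n w / (s - r).factorial *
          ∑ j ∈ range (s - r + 1), (stirling1 (s - r) j : ℝ) * (j.choose u : ℝ) *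
            (-1 : ℝ) ^ ((s : ℤ) - r - u) * (((p : ℤ) + 2 - s + r : ℤ) : ℝ) ^ (j - u) *
            (k : ℝ) ^ u := by
  simp only [C82, C83, ← sum_sub_distrib, mul_sum]
  refine sum_congr rfl fun r _ => sum_congr rfl fun n _ => sum_congr rfl fun j _ => ?_
  rw [zchooseBracket]
  ring

theorem sum_C82_sub_C83_mul_sigmaB (α : ℝ) (s x p w k : ℕ) :
    ∑ u ∈ range (s + 1), (C82 s x k w p u - C83 s x k w p u) *
        sigmaB ((w : ℝ) + α - 1 - u) (p + 2) k =
      ∑ r ∈ range (s + 1), ∑ n ∈ range (r + 2), ∑ d ∈ k.divisors.filter (· ≤ k / (p + 2)),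
        zchooseBracket x r n k * C8 s r p n w * (d : ℝ) ^ ((w : ℝ) + α - 1) *
          (s - r + (k / d - (p + 2))).choose (s - r) := by
  simp_rw [C82_sub_C83, sum_mul]
  rw [sum_comm]
  refine sum_congr rfl fun r hr => ?_
  rw [sum_comm]
  refine sum_congr rfl fun n _ => ?_
  simp_rw [mul_assoc (zchooseBracket x r n k * C8 s r p n w / ((s - r).factorial : ℝ))]
  rw [← mul_sum, sum_stirling1_choose_mul_sigmaB _ (by simpa [Nat.lt_succ_iff] using hr),
    mul_sum]
  refine sum_congr rfl fun d _ => ?_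
  field_simp

noncomputable def sigma8Term (s i r p n w : ℕ) : ℝ⟦X⟧ :=
  C (C8 s r p n w * (i : ℝ) ^ w) * X ^ ((p + 2) * i + n - 1) * ((1 - X ^ i)⁻¹) ^ (s - r + 1) *
    (C (r.choose n : ℝ) * ((1 - X)⁻¹) ^ (r + 1) -
      C ((r + 1).choose n : ℝ) * ((1 - X)⁻¹) ^ (r + 2))

theorem coeff_C_rpow_mul_sigma8Term {i : ℕ} (hi : 0 < i) (α : ℝ) (s x r p n w : ℕ) :
    coeff x (C ((i : ℝ) ^ (α - 1)) * sigma8Term s i r p n w) =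
      ∑ j ∈ Icc (p + 2) ((x + 1) / i), C8 s r p n w * (i : ℝ) ^ ((w : ℝ) + α - 1) *
        (s - r + (j - (p + 2))).choose (s - r) * coeff (x + 1 - i * j) (bracketSeries r n) := by
  have hrpow : (i : ℝ) ^ (α - 1) * (i : ℝ) ^ w = (i : ℝ) ^ ((w : ℝ) + α - 1) := by
    rw [← Real.rpow_natCast, ← Real.rpow_add (by positivity)]
    ring_nf
  have hassoc : C ((i : ℝ) ^ (α - 1)) * sigma8Term s i r p n w =
      C (C8 s r p n w * (i : ℝ) ^ ((w : ℝ) + α - 1)) *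
        (X ^ ((p + 2) * i + n - 1) * ((1 - X ^ i)⁻¹) ^ (s - r + 1) *
          (C (r.choose n : ℝ) * ((1 - X)⁻¹) ^ (r + 1) -
            C ((r + 1).choose n : ℝ) * ((1 - X)⁻¹) ^ (r + 2))) := by
    rw [sigma8Term, ← hrpow, map_mul, map_mul, map_mul]
    ring
  rw [hassoc, coeff_C_mul, coeff_X_pow_mul_inv_one_sub_X_pow_pow_mul hi (by omega), mul_sum]
  refine sum_congr rfl fun j _ => ?_
  rw [bracketSeries]
  ring

theorem sum_coeff_C_rpow_mul_sigma8Term (α : ℝ) {s x r n : ℕ} (p w : ℕ) (hn : n ≤ r + 1) :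
    ∑ i ∈ Icc 1 (x + 1), coeff x (C ((i : ℝ) ^ (α - 1)) * sigma8Term s i r p n w) =
      ∑ k ∈ Icc 1 (x + 1), ∑ d ∈ k.divisors.filter (· ≤ k / (p + 2)),
        zchooseBracket x r n k * C8 s r p n w * (d : ℝ) ^ ((w : ℝ) + α - 1) *
          (s - r + (k / d - (p + 2))).choose (s - r) := by
  rw [Nat.sum_Icc_sum_divisors_filter_le_div (by omega)]
  refine sum_congr rfl fun i hi => ?_
  have hi : 0 < i := (mem_Icc.mp hi).1
  rw [coeff_C_rpow_mul_sigma8Term hi]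
  refine sum_congr rfl fun j hj => ?_
  have hij : i * j ≤ x + 1 := by
    rw [mem_Icc, Nat.le_div_iff_mul_le hi] at hj
    linarith
  rw [zchooseBracket_eq_coeff_bracketSeries hn hij, Nat.mul_div_cancel_left j hi]
  ring

theorem Sigma8_eq_sum_sigma8Term (s i : ℕ) :
    Sigma8 s i = ∑ r ∈ range (s + 1), ∑ p ∈ range (s + 1), ∑ n ∈ range (r + 2),
      ∑ w ∈ range (s + 1), sigma8Term s i r p n w := rfl

theorem S8c_eq_sum_coeff (α : ℝ) (s x : ℕ) :
    S8c α s x = ∑ p ∈ range (s + 1), ∑ w ∈ range (s + 1), ∑ r ∈ range (s + 1),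
      ∑ n ∈ range (r + 2), ∑ i ∈ Icc 1 (x + 1),
        coeff x (C ((i : ℝ) ^ (α - 1)) * sigma8Term s i r p n w) := by
  simp only [S8c, Sigma8_eq_sum_sigma8Term, mul_sum, map_sum]
  -- move the sum over `i` innermost
  simp only [sum_comm (s := Icc 1 (x + 1))]
  rw [sum_comm]
  refine sum_congr rfl fun p _ => ?_
  rw [sum_congr rfl fun r _ => sum_comm, sum_comm]

theorem S8_eq_bounded_divisor_sums_general (α : ℝ) (s x : ℕ) :
    S8c α s x =
      ∑ p ∈ Finset.range (s + 1), ∑ u ∈ Finset.range (s + 1),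
        ∑ w ∈ Finset.range (s + 1), ∑ k ∈ Finset.Icc 1 (x + 1),
          (C82 s x k w p u - C83 s x k w p u) *
            sigmaB ((w : ℝ) + α - 1 - u) (p + 2) k := by
  rw [S8c_eq_sum_coeff]
  refine sum_congr rfl fun p _ => ?_
  symm
  rw [sum_comm]
  refine sum_congr rfl fun w _ => ?_
  rw [sum_comm]
  simp_rw [sum_C82_sub_C83_mul_sigmaB]
  rw [sum_comm]
  refine sum_congr rfl fun r _ => ?_
  rw [sum_comm]
  refine sum_congr rfl fun n hn => ?_
  exact (sum_coeff_C_rpow_mul_sigma8Term α p w (by simpa [Nat.lt_succ_iff] using hn)).symm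

/-- Theorem, part (ii): expansion of `S_{8,s,x}^{(α)}` by the
bounded-divisor sum functions `σ_{β,m}(n)`. -/
theorem S8_eq_bounded_divisor_sums (α : ℝ) (hα : 0 ≤ α) (s x : ℕ)
    (hs : 1 ≤ s) (hx : 1 ≤ x) :
    S8c α s x =
      ∑ p ∈ Finset.range (s + 1), ∑ u ∈ Finset.range (s + 1),
        ∑ w ∈ Finset.range (s + 1), ∑ k ∈ Finset.Icc 1 (x + 1),
          (C82 s x k w p u - C83 s x k w p u) *
            sigmaB ((w : ℝ) + α - 1 - u) (p + 2) k :=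
  S8_eq_bounded_divisor_sums_general α s x
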